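/- arXiv:2106.10985 — 3 statements merged into one kernel-verified Lean document; each statement's English description precedes it below -/
import Mathlib

section
/- Let H be a real Hilbert space, α ∈ (0,1), T > 0, and u ∈ C¹([0,T]; H). Then for every t ∈ (0,T), the Caputo derivative of t ↦ ‖u(t)‖²_H satisfies ½ ∂ₜ^α ‖u‖²_H (t) ≤ ⟨(∂ₜ^α u)(t), u(t)⟩_H, i.e. ½ ∫₀ᵗ g_{1−α}(t−s) · (d/ds)‖u(s)‖²_H ds ≤ ⟨∫₀ᵗ g_{1−α}(t−s) u′(s) ds, u(t)⟩_H. -/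
/-!
The difference of the two sides is `∫₀ᵗ w s * ⟪u' s, u t - u s⟫ ds = -½ ∫₀ᵗ w φ'` for the kernel
`w s = g_{1-α} (t - s)` and `φ s = ‖u t - u s‖²`. Integrating by parts moves the derivative onto
`w`, which is nondecreasing, while `φ ≥ 0`. The boundary term at `s = t` vanishes because
`φ s = O((t - s)²)` beats the singularity `(t - s)^(-α)`, and the one at `s = 0` has the right sign.
-/

open MeasureTheory Set Filter Topology
open scoped RealInnerProductSpace

noncomputable def riemannLiouvilleKernel (β τ : ℝ) : ℝ := τ ^ (β - 1) / Real.Gamma β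

section Kernel

variable {β : ℝ}

theorem riemannLiouvilleKernel_nonneg (hβ : 0 < β) {τ : ℝ} (hτ : 0 ≤ τ) :
    0 ≤ riemannLiouvilleKernel β τ :=
  div_nonneg (Real.rpow_nonneg hτ _) (Real.Gamma_pos_of_pos hβ).le

theorem hasDerivAt_riemannLiouvilleKernel_sub {t s : ℝ} (hs : s < t) :
    HasDerivAt (fun s => riemannLiouvilleKernel β (t - s))
      ((1 - β) * (t - s) ^ (β - 2) / Real.Gamma β) s := by
  have h := ((Real.hasDerivAt_rpow_const (p := β - 1) (Or.inl (sub_pos.2 hs).ne')).comp s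
    ((hasDerivAt_id s).const_sub t)).div_const (Real.Gamma β)
  refine h.congr_deriv ?_
  rw [show β - 1 - 1 = β - 2 by ring]
  ring

theorem integrableOn_riemannLiouvilleKernel_sub (hβ : 0 < β) (t a b : ℝ) :
    IntegrableOn (fun s => riemannLiouvilleKernel β (t - s)) (Icc a b) := by
  have hg : IntervalIntegrable (riemannLiouvilleKernel β) volume (t - a) (t - b) :=
    (intervalIntegral.intervalIntegrable_rpow' (by linarith)).div_const _
  have h := hg.comp_sub_left t
  rw [sub_sub_cancel, sub_sub_cancel] at h
  exact ((intervalIntegrable_iff' (by finiteness)).1 h).mono_set Icc_subset_uIcc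

theorem tendsto_riemannLiouvilleKernel_sub_mul_sq (hβ : 0 < β) (t : ℝ) :
    Tendsto (fun s => riemannLiouvilleKernel β (t - s) * (t - s) ^ 2) (𝓝[<] t) (𝓝 0) := by
  have hcont : Continuous fun s : ℝ => (t - s) ^ (β + 1) / Real.Gamma β :=
    ((continuous_const.sub continuous_id).rpow_const fun _ => Or.inr (by linarith)).div_const _
  have hpow : Tendsto (fun s => (t - s) ^ (β + 1) / Real.Gamma β) (𝓝 t) (𝓝 0) := by
    simpa [Real.zero_rpow (by linarith : β + 1 ≠ 0)] using hcont.tendsto t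
  refine (hpow.mono_left nhdsWithin_le_nhds).congr' ?_
  filter_upwards [self_mem_nhdsWithin] with s hs
  rw [riemannLiouvilleKernel, div_mul_eq_mul_div, ← Real.rpow_natCast,
    ← Real.rpow_add (sub_pos.2 hs)]
  norm_num
  ring_nf

end Kernel

/-- Integration by parts against a nondecreasing weight; the term `∫ w' φ ≥ 0` is dropped, so it
need not be integrable. -/
theorem integral_mul_deriv_le_of_deriv_nonneg {a b : ℝ} (hab : a ≤ b) {w w' φ φ' : ℝ → ℝ}
    (hcont : ContinuousOn (fun x => w x * φ x) (Icc a b))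
    (hw : ∀ x ∈ Ioo a b, HasDerivAt w (w' x) x) (hφ : ∀ x ∈ Ioo a b, HasDerivAt φ (φ' x) x)
    (hw' : ∀ x ∈ Ioo a b, 0 ≤ w' x) (hφ₀ : ∀ x ∈ Ioo a b, 0 ≤ φ x)
    (hint : IntegrableOn (fun x => w x * φ' x) (Icc a b)) :
    ∫ x in a..b, w x * φ' x ≤ w b * φ b - w a * φ a := by
  have key := intervalIntegral.sub_le_integral_of_hasDeriv_right_of_le hab hcont.neg
    (fun x hx => ((hw x hx).mul (hφ x hx)).neg.hasDerivWithinAt) hint.neg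
    (fun x hx => neg_le_neg (le_add_of_nonneg_left (mul_nonneg (hw' x hx) (hφ₀ x hx))))
  simp only [Pi.neg_apply, intervalIntegral.integral_neg] at key
  linarith

theorem continuousWithinAt_mul_norm_sub_sq {E : Type*} [SeminormedAddCommGroup E] {u : ℝ → E}
    {w : ℝ → ℝ} {a b M : ℝ} (hab : a ≤ b) (hu : ∀ s ∈ Icc a b, ‖u b - u s‖ ≤ M * (b - s))
    (hwb : Tendsto (fun s => w s * (b - s) ^ 2) (𝓝[<] b) (𝓝 0)) :
    ContinuousWithinAt (fun s => w s * ‖u b - u s‖ ^ 2) (Icc a b) b := by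
  rw [← Ico_insert_right hab, continuousWithinAt_insert_self, ContinuousWithinAt]
  have hlim : Tendsto (fun s => ‖w s * (b - s) ^ 2‖ * M ^ 2) (𝓝[Ico a b] b) (𝓝 0) := by
    simpa using (hwb.mono_left (nhdsWithin_mono _ Ico_subset_Iio_self)).norm.mul_const (M ^ 2)
  simp only [sub_self, norm_zero, zero_pow two_ne_zero, mul_zero]
  refine squeeze_zero_norm' ?_ hlim
  filter_upwards [self_mem_nhdsWithin] with s hs
  have hsq : ‖u b - u s‖ ^ 2 ≤ (M * (b - s)) ^ 2 :=
    pow_le_pow_left₀ (norm_nonneg _) (hu s (Ico_subset_Icc_self hs)) 2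
  rw [norm_mul, norm_mul, norm_pow, norm_norm, Real.norm_of_nonneg (sq_nonneg (b - s))]
  calc ‖w s‖ * ‖u b - u s‖ ^ 2 ≤ ‖w s‖ * (M * (b - s)) ^ 2 :=
        mul_le_mul_of_nonneg_left hsq (norm_nonneg _)
    _ = ‖w s‖ * (b - s) ^ 2 * M ^ 2 := by ring

section Hilbert

variable {H : Type*} [NormedAddCommGroup H] [InnerProductSpace ℝ H]
  {u u' : ℝ → H} {w w' : ℝ → ℝ} {a b : ℝ}

theorem integral_mul_inner_sub_nonneg (hab : a ≤ b)
    (hu : ∀ s ∈ Icc a b, HasDerivAt u (u' s) s) (hu' : ContinuousOn u' (Icc a b))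
    (hw : ∀ s ∈ Ico a b, HasDerivAt w (w' s) s) (hw' : ∀ s ∈ Ioo a b, 0 ≤ w' s) (hwa : 0 ≤ w a)
    (hwint : IntegrableOn w (Icc a b))
    (hwb : Tendsto (fun s => w s * (b - s) ^ 2) (𝓝[<] b) (𝓝 0)) :
    0 ≤ ∫ s in Ioo a b, w s * ⟪u' s, u b - u s⟫ := by
  obtain ⟨M, hM⟩ := isCompact_Icc.exists_bound_of_continuousOn hu'
  have hu_cont : ContinuousOn u (Icc a b) := fun s hs => (hu s hs).continuousAt.continuousWithinAt
  have hLip : ∀ s ∈ Icc a b, ‖u b - u s‖ ≤ M * (b - s) := fun s hs => by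
    simpa [Real.norm_eq_abs, abs_of_nonneg (sub_nonneg.2 hs.2)] using
      (convex_Icc a b).norm_image_sub_le_of_norm_hasDerivWithin_le
        (fun x hx => (hu x hx).hasDerivWithinAt) hM hs (right_mem_Icc.2 hab)
  set φ : ℝ → ℝ := fun s => ‖u b - u s‖ ^ 2
  set φ' : ℝ → ℝ := fun s => -(2 * ⟪u' s, u b - u s⟫)
  have hφ : ∀ s ∈ Icc a b, HasDerivAt φ (φ' s) s := fun s hs => by
    convert ((hu s hs).const_sub (u b)).norm_sq using 1
    simp only [φ', inner_neg_right, real_inner_comm]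
    ring
  have hcont : ContinuousOn (fun s => w s * φ s) (Icc a b) := fun s hs =>
    (eq_or_lt_of_le hs.2).elim (fun h => by rw [h]; exact continuousWithinAt_mul_norm_sub_sq hab hLip hwb)
      fun hsb => (hw s ⟨hs.1, hsb⟩).continuousAt.continuousWithinAt.mul
        ((continuousOn_const.sub hu_cont).norm.pow 2 s hs)
  have hint : IntegrableOn (fun s => w s * φ' s) (Icc a b) :=
    hwint.mul_continuousOn (continuousOn_const.mul (hu'.inner (continuousOn_const.sub hu_cont))).neg
      isCompact_Icc
  have hibp := integral_mul_deriv_le_of_deriv_nonneg hab hcont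
    (fun s hs => hw s (Ioo_subset_Ico_self hs)) (fun s hs => hφ s (Ioo_subset_Icc_self hs)) hw'
    (fun s _ => sq_nonneg _) hint
  have hφb : φ b = 0 := by simp [φ]
  have hrw : ∫ s in Ioo a b, w s * ⟪u' s, u b - u s⟫ = -(1 / 2) * ∫ s in a..b, w s * φ' s := by
    rw [intervalIntegral.integral_of_le hab, integral_Ioc_eq_integral_Ioo, ← integral_const_mul]
    congr 1 with s
    simp only [φ']
    ring
  rw [hφb, mul_zero, zero_sub] at hibp
  rw [hrw]
  nlinarith [mul_nonneg hwa (sq_nonneg ‖u b - u a‖)]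

theorem half_integral_mul_deriv_norm_sq_le_inner_integral_smul [CompleteSpace H] (hab : a ≤ b)
    (hu : ∀ s ∈ Icc a b, HasDerivAt u (u' s) s) (hu' : ContinuousOn u' (Icc a b))
    (hw : ∀ s ∈ Ico a b, HasDerivAt w (w' s) s) (hw' : ∀ s ∈ Ioo a b, 0 ≤ w' s) (hwa : 0 ≤ w a)
    (hwint : IntegrableOn w (Icc a b))
    (hwb : Tendsto (fun s => w s * (b - s) ^ 2) (𝓝[<] b) (𝓝 0)) :
    (1 / 2) * ∫ s in Ioo a b, w s * deriv (fun r => ‖u r‖ ^ 2) s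
      ≤ ⟪∫ s in Ioo a b, w s • u' s, u b⟫ := by
  have hu_cont : ContinuousOn u (Icc a b) := fun s hs => (hu s hs).continuousAt.continuousWithinAt
  have hint : ∀ v : ℝ → H, ContinuousOn v (Icc a b) →
      IntegrableOn (fun s => w s * ⟪u' s, v s⟫) (Ioo a b) := fun v hv =>
    (hwint.mul_continuousOn (hu'.inner hv) isCompact_Icc).mono_set Ioo_subset_Icc_self
  have hlhs : (1 / 2) * ∫ s in Ioo a b, w s * deriv (fun r => ‖u r‖ ^ 2) s
      = ∫ s in Ioo a b, w s * ⟪u' s, u s⟫ := by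
    rw [← integral_const_mul]
    refine setIntegral_congr_fun measurableSet_Ioo fun s hs => ?_
    rw [(hu s (Ioo_subset_Icc_self hs)).norm_sq.deriv, real_inner_comm]
    ring
  have hrhs : ⟪∫ s in Ioo a b, w s • u' s, u b⟫ = ∫ s in Ioo a b, w s * ⟪u' s, u b⟫ := by
    rw [real_inner_comm, ← integral_inner
      ((hwint.smul_continuousOn hu' isCompact_Icc).mono_set Ioo_subset_Icc_self)]
    simp only [real_inner_smul_right, real_inner_comm]
  rw [hlhs, hrhs, ← sub_nonneg, ← integral_sub (hint _ continuousOn_const) (hint u hu_cont)]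
  simpa only [← mul_sub, ← inner_sub_right] using
    integral_mul_inner_sub_nonneg hab hu hu' hw hw' hwa hwint hwb

end Hilbert

theorem fractional_chain_sq_general {H : Type*} [NormedAddCommGroup H] [InnerProductSpace ℝ H]
    [CompleteSpace H]
    (α T : ℝ) (hα : α ∈ Set.Ioo (0:ℝ) 1)
    (u u' : ℝ → H)
    (hu : ∀ t ∈ Set.Icc (0:ℝ) T, HasDerivAt u (u' t) t)
    (hu' : ContinuousOn u' (Set.Icc 0 T)) :
    ∀ t ∈ Set.Ioo (0:ℝ) T,
      (1/2) * ∫ s in Set.Ioo 0 t,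
          ((t - s) ^ ((1 - α) - 1) / Real.Gamma (1 - α)) * deriv (fun r => ‖u r‖ ^ 2) s
        ≤ (inner ℝ (∫ s in Set.Ioo 0 t, ((t - s) ^ ((1 - α) - 1) / Real.Gamma (1 - α)) • u' s)
            (u t) : ℝ) := by
  intro t ⟨ht₀, htT⟩
  have hβ : 0 < 1 - α := sub_pos.2 hα.2
  have hsub : Icc 0 t ⊆ Icc 0 T := Icc_subset_Icc_right htT.le
  have hw' : ∀ s ∈ Ioo 0 t, 0 ≤ (1 - (1 - α)) * (t - s) ^ ((1 - α) - 2) / Real.Gamma (1 - α) :=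
    fun s hs => div_nonneg (mul_nonneg (by linarith [hα.1]) (Real.rpow_nonneg (by linarith [hs.2]) _))
      (Real.Gamma_pos_of_pos hβ).le
  exact half_integral_mul_deriv_norm_sq_le_inner_integral_smul ht₀.le (fun s hs => hu s (hsub hs))
    (hu'.mono hsub) (fun s hs => hasDerivAt_riemannLiouvilleKernel_sub hs.2) hw'
    (riemannLiouvilleKernel_nonneg hβ (sub_nonneg.2 ht₀.le))
    (integrableOn_riemannLiouvilleKernel_sub hβ t 0 t)
    (tendsto_riemannLiouvilleKernel_sub_mul_sq hβ t)

/-- Fractional chain inequality for the squared norm: for `u ∈ C¹([0,T];H)` and `t ∈ (0,T)`,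
`½ ∂ₜ^α ‖u‖² (t) ≤ ⟨(∂ₜ^α u)(t), u(t)⟩`, where the Caputo derivative of order `α` is
`(∂ₜ^α u)(t) = ∫₀ᵗ g_{1-α}(t-s) u'(s) ds` with `g_β(t) = t^(β-1)/Γ(β)`. -/
theorem fractional_chain_sq {H : Type*} [NormedAddCommGroup H] [InnerProductSpace ℝ H]
    [CompleteSpace H]
    (α T : ℝ) (hα : α ∈ Set.Ioo (0:ℝ) 1) (hT : 0 < T)
    (u u' : ℝ → H)
    (hu : ∀ t ∈ Set.Icc (0:ℝ) T, HasDerivAt u (u' t) t)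
    (hu' : ContinuousOn u' (Set.Icc 0 T)) :
    ∀ t ∈ Set.Ioo (0:ℝ) T,
      (1/2) * ∫ s in Set.Ioo 0 t,
          ((t - s) ^ ((1 - α) - 1) / Real.Gamma (1 - α)) * deriv (fun r => ‖u r‖ ^ 2) s
        ≤ (inner ℝ (∫ s in Set.Ioo 0 t, ((t - s) ^ ((1 - α) - 1) / Real.Gamma (1 - α)) • u' s)
            (u t) : ℝ) :=
  fractional_chain_sq_general α T hα u u' hu hu'
end

section
/- Let H be a real Hilbert space, α ∈ (0,1), T > 0, λ ∈ ℝ, and let f : H → ℝ be Fréchet differentiable and λ-convex with respect to H, i.e. x ↦ f(x) − (λ/2)‖x‖²_H is convex. Then for every u ∈ C¹([0,T); H) and every t ∈ (0,T): (∂ₜ^α (f ∘ u))(t) ≤ ⟨f′(u(t)), (∂ₜ^α u)(t)⟩ + (λ/2)(∂ₜ^α ‖u‖²_H)(t) − λ ⟨(∂ₜ^α u)(t), u(t)⟩_H, where f′(u(t)) ∈ H* acts on (∂ₜ^α u)(t). -/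
/-!
With `φ = f - (λ/2)‖·‖²`, convex with derivative `φ' x = f' x - λ⟪x, ·⟫`, the function
`F s = φ (u s) - φ' (u t) (u s)` attains its minimum over `[0, t]` at `t` by the gradient
inequality. The Caputo derivative of such an `F` at `t` is nonpositive: integrating by parts on
`[0, x]`, `x < t`, against the decreasing kernel `s ↦ g(t - s)` gives
`∫₀ˣ g(t - s) F'(s) ds ≤ g(t - x) (F x - F t)`, and the right side tends to `0` because `F` is
differentiable at `t` and `y g(y) → 0`. Expanding `∂ₜ^α F (t) ≤ 0` by linearity is the claim.

Since `f'` is not assumed continuous, integrability of `g(t - s) (φ ∘ u)'(s)` comes from the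
Banach–Steinhaus theorem: `φ'` is bounded on the compact set `u '' [0, t]`.
-/

open MeasureTheory Set Filter Topology

/-- The kernel `g_β` of the Caputo derivative. -/
noncomputable def fracKernel (β x : ℝ) : ℝ := x ^ (β - 1) / Real.Gamma β

section Kernel

variable {β t : ℝ}

lemma fracKernel_nonneg (hβ : 0 < β) {x : ℝ} (hx : 0 ≤ x) : 0 ≤ fracKernel β x :=
  div_nonneg (Real.rpow_nonneg hx _) (Real.Gamma_pos_of_pos hβ).le

lemma hasDerivAt_fracKernel_sub {s : ℝ} (hs : s < t) :
    HasDerivAt (fun r => fracKernel β (t - r))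
      ((1 - β) * (t - s) ^ (β - 1 - 1) / Real.Gamma β) s := by
  have h := ((Real.hasDerivAt_rpow_const (p := β - 1) (Or.inl (sub_pos.2 hs).ne')).comp s
    ((hasDerivAt_id s).const_sub t)).div_const (Real.Gamma β)
  exact h.congr_deriv (by ring)

lemma integrableOn_fracKernel_sub (hβ : 0 < β) :
    IntegrableOn (fun s => fracKernel β (t - s)) (Ioo 0 t) := by
  rcases le_or_gt t 0 with ht | ht
  · simp [Ioo_eq_empty_of_le ht]
  have h := ((intervalIntegral.intervalIntegrable_rpow' (r := β - 1) (a := 0) (b := t)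
    (by linarith)).comp_sub_left t).symm.div_const (Real.Gamma β)
  simp only [sub_zero, sub_self] at h
  exact ((intervalIntegrable_iff_integrableOn_Ioc_of_le ht.le).1 h).mono_set Ioo_subset_Ioc_self

lemma integrableOn_fracKernel_smul {E : Type*} [NormedAddCommGroup E] [NormedSpace ℝ E]
    (hβ : 0 < β) {w : ℝ → E} {C : ℝ} (hw : AEStronglyMeasurable w (volume.restrict (Ioo 0 t)))
    (hC : ∀ s ∈ Ioo 0 t, ‖w s‖ ≤ C) :
    IntegrableOn (fun s => fracKernel β (t - s) • w s) (Ioo 0 t) :=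
  (integrableOn_fracKernel_sub hβ).smul_of_top_left <| memLp_top_of_bound hw C <|
    (ae_restrict_iff' measurableSet_Ioo).2 (Eventually.of_forall hC)

lemma tendsto_fracKernel_sub_mul_sub (hβ : 0 < β) {F : ℝ → ℝ} (hF : DifferentiableAt ℝ F t) :
    Tendsto (fun x => fracKernel β (t - x) * (F x - F t)) (𝓝[<] t) (𝓝 0) := by
  have hpow : Tendsto (fun x => (t - x) ^ β) (𝓝[<] t) (𝓝 0) := by
    have hsub : Tendsto (fun x => t - x) (𝓝 t) (𝓝 (t - t)) := tendsto_const_nhds.sub tendsto_id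
    rw [sub_self] at hsub
    have h := (Real.continuousAt_rpow_const 0 β (Or.inr hβ.le)).tendsto.comp hsub
    rw [Real.zero_rpow hβ.ne'] at h
    exact h.mono_left nhdsWithin_le_nhds
  have hslope : Tendsto (slope F t) (𝓝[<] t) (𝓝 (deriv F t)) :=
    (hasDerivAt_iff_tendsto_slope.1 hF.hasDerivAt).mono_left
      (nhdsWithin_mono _ fun x hx => ne_of_lt hx)
  have h := (hpow.mul hslope).div_const (-Real.Gamma β)
  rw [zero_mul, zero_div] at h
  refine h.congr' ?_
  filter_upwards [self_mem_nhdsWithin] with x (hx : x < t)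
  have htx : 0 < t - x := sub_pos.2 hx
  have hxt : x - t ≠ 0 := (sub_neg.2 hx).ne
  have hΓ : Real.Gamma β ≠ 0 := (Real.Gamma_pos_of_pos hβ).ne'
  rw [slope_def_field, fracKernel, show (t - x) ^ β = (t - x) ^ (β - 1) * (t - x) by
    rw [← Real.rpow_add_one htx.ne', sub_add_cancel]]
  field_simp
  ring

lemma intervalIntegral_fracKernel_mul_deriv_le (hβ0 : 0 < β) (hβ1 : β ≤ 1) {x : ℝ} (hx0 : 0 ≤ x)
    (hxt : x < t) {F : ℝ → ℝ} (hF : ∀ s ∈ Icc 0 x, DifferentiableAt ℝ F s)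
    (hmin : IsMinOn F (Icc 0 x) t)
    (hint : IntegrableOn (fun s => fracKernel β (t - s) * deriv F s) (Ioc 0 x)) :
    ∫ s in 0..x, fracKernel β (t - s) * deriv F s ≤ fracKernel β (t - x) * (F x - F t) := by
  set g' : ℝ → ℝ := fun s => (1 - β) * (t - s) ^ (β - 1 - 1) / Real.Gamma β
  have hIcc : uIcc 0 x = Icc 0 x := uIcc_of_le hx0
  have hg'F : IntervalIntegrable (fun s => g' s * (F s - F t)) volume 0 x := by
    refine ContinuousOn.intervalIntegrable ?_
    rw [hIcc]
    refine ContinuousOn.mul ?_ fun s hs => (hF s hs).continuousAt.continuousWithinAt.sub_const _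
    refine (continuousOn_const.mul ((continuousOn_const.sub continuousOn_id).rpow_const
      fun s hs => ?_)).div_const _
    exact Or.inl (sub_pos.2 (hs.2.trans_lt hxt)).ne'
  have hparts := intervalIntegral.integral_eq_sub_of_hasDerivAt
    (f := fun s => fracKernel β (t - s) * (F s - F t)) (fun s hs => by
      rw [hIcc] at hs
      exact (hasDerivAt_fracKernel_sub (hs.2.trans_lt hxt)).mul
        ((hF s hs).hasDerivAt.sub_const _))
    (hg'F.add ((intervalIntegrable_iff_integrableOn_Ioc_of_le hx0).2 hint))
  rw [intervalIntegral.integral_add hg'F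
    ((intervalIntegrable_iff_integrableOn_Ioc_of_le hx0).2 hint)] at hparts
  have hg'F_nonneg : 0 ≤ ∫ s in 0..x, g' s * (F s - F t) :=
    intervalIntegral.integral_nonneg hx0 fun s hs => mul_nonneg
      (div_nonneg (mul_nonneg (by linarith) (Real.rpow_nonneg (by linarith [hs.2]) _))
        (Real.Gamma_pos_of_pos hβ0).le) (sub_nonneg.2 (hmin hs))
  have h0 : 0 ≤ fracKernel β (t - 0) * (F 0 - F t) :=
    mul_nonneg (fracKernel_nonneg hβ0 (by linarith)) (sub_nonneg.2 (hmin ⟨le_rfl, hx0⟩))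
  linarith

theorem setIntegral_fracKernel_mul_deriv_nonpos_of_isMinOn (hβ0 : 0 < β) (hβ1 : β ≤ 1)
    (ht : 0 < t) {F : ℝ → ℝ} (hF : ∀ s ∈ Icc 0 t, DifferentiableAt ℝ F s)
    (hmin : IsMinOn F (Icc 0 t) t)
    (hint : IntegrableOn (fun s => fracKernel β (t - s) * deriv F s) (Ioo 0 t)) :
    ∫ s in Ioo 0 t, fracKernel β (t - s) * deriv F s ≤ 0 := by
  have hint' : IntervalIntegrable (fun s => fracKernel β (t - s) * deriv F s) volume 0 t := by
    rw [intervalIntegrable_iff_integrableOn_Ioc_of_le ht.le]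
    exact hint.congr_set_ae Ioo_ae_eq_Ioc.symm
  have hprim : Tendsto (fun x => ∫ s in 0..x, fracKernel β (t - s) * deriv F s) (𝓝[<] t)
      (𝓝 (∫ s in 0..t, fracKernel β (t - s) * deriv F s)) := by
    have h :=
      intervalIntegral.continuousOn_primitive_interval' hint' left_mem_uIcc t right_mem_uIcc
    rw [uIcc_of_le ht.le] at h
    exact h.tendsto.mono_left
      (nhdsWithin_le_of_mem (mem_of_superset (Ioo_mem_nhdsLT ht) Ioo_subset_Icc_self))
  rw [← integral_Ioc_eq_integral_Ioo, ← intervalIntegral.integral_of_le ht.le]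
  refine le_of_tendsto_of_tendsto hprim
    (tendsto_fracKernel_sub_mul_sub hβ0 (hF t ⟨ht.le, le_rfl⟩)) ?_
  filter_upwards [Ioo_mem_nhdsLT ht] with x hx
  exact intervalIntegral_fracKernel_mul_deriv_le hβ0 hβ1 hx.1.le hx.2
    (fun s hs => hF s ⟨hs.1, hs.2.trans hx.2.le⟩) (hmin.on_subset (Icc_subset_Icc_right hx.2.le))
    (hint.mono_set (Ioc_subset_Ioo_right hx.2))

end Kernel

section Convex

variable {E : Type*} [NormedAddCommGroup E] [NormedSpace ℝ E] {φ : E → ℝ}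

theorem ConvexOn.add_fderiv_sub_le (hφ : ConvexOn ℝ univ φ) {L : E →L[ℝ] ℝ} {y : E}
    (hL : HasFDerivAt φ L y) (x : E) : φ y + L (x - y) ≤ φ x := by
  have hline : ConvexOn ℝ univ (fun r : ℝ => φ (AffineMap.lineMap y x r)) := by
    have h := hφ.comp_affineMap (AffineMap.lineMap (k := ℝ) y x)
    rwa [preimage_univ] at h
  have hd : HasDerivAt (fun r : ℝ => φ (AffineMap.lineMap y x r)) (L (x - y)) 0 := by
    refine HasFDerivAt.comp_hasDerivAt (f := fun r : ℝ => AffineMap.lineMap y x r) 0 ?_ ?_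
    · simpa using hL
    · simpa using AffineMap.hasDerivAt_lineMap (a := y) (b := x) (x := (0 : ℝ))
  have h := hline.le_slope_of_hasDerivAt (mem_univ 0) (mem_univ 1) one_pos hd
  simp only [slope_def_field, AffineMap.lineMap_apply_zero, AffineMap.lineMap_apply_one] at h
  linarith

theorem ConvexOn.exists_bound_fderiv_of_isCompact [CompleteSpace E] (hφ : ConvexOn ℝ univ φ)
    {φ' : E → E →L[ℝ] ℝ} (hφ' : ∀ x, HasFDerivAt φ (φ' x) x) {K : Set E} (hK : IsCompact K) :
    ∃ C, ∀ x ∈ K, ‖φ' x‖ ≤ C := by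
  have hcont : Continuous φ := continuous_iff_continuousAt.2 fun x => (hφ' x).continuousAt
  suffices ∀ h, ∃ M, ∀ x : K, ‖φ' x h‖ ≤ M by
    obtain ⟨C, hC⟩ := banach_steinhaus this
    exact ⟨C, fun x hx => hC ⟨x, hx⟩⟩
  intro h
  obtain ⟨M, hM⟩ := hK.exists_bound_of_continuousOn
    (f := fun x => |φ (x + h)| + |φ (x - h)| + |φ x|) (by fun_prop)
  refine ⟨M, fun ⟨x, hx⟩ => ?_⟩
  -- the gradient inequality at `x ± h` squeezes `φ' x h` between two difference quotients
  have hplus := hφ.add_fderiv_sub_le (hφ' x) (x + h)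
  have hminus := hφ.add_fderiv_sub_le (hφ' x) (x - h)
  rw [add_sub_cancel_left] at hplus
  rw [sub_sub_cancel_left, map_neg] at hminus
  have hsum := (le_abs_self _).trans (hM x hx)
  rw [Real.norm_eq_abs, abs_le]
  constructor <;> linarith [le_abs_self (φ (x + h)), neg_abs_le (φ (x + h)),
    le_abs_self (φ (x - h)), neg_abs_le (φ (x - h)), le_abs_self (φ x), neg_abs_le (φ x)]

variable [CompleteSpace E] {φ' : E → E →L[ℝ] ℝ} {β t : ℝ} {u u' : ℝ → E}

theorem ConvexOn.integrableOn_fracKernel_mul_deriv_comp (hφ : ConvexOn ℝ univ φ)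
    (hφ' : ∀ x, HasFDerivAt φ (φ' x) x) (hβ : 0 < β) (hu : ∀ s ∈ Icc 0 t, HasDerivAt u (u' s) s)
    (hu' : ContinuousOn u' (Icc 0 t)) :
    IntegrableOn (fun s => fracKernel β (t - s) * deriv (fun r => φ (u r)) s) (Ioo 0 t) := by
  have hucont : ContinuousOn u (Icc 0 t) := fun s hs => (hu s hs).continuousAt.continuousWithinAt
  obtain ⟨C, hC⟩ :=
    hφ.exists_bound_fderiv_of_isCompact hφ' (isCompact_Icc.image_of_continuousOn hucont)
  obtain ⟨C', hC'⟩ := isCompact_Icc.exists_bound_of_continuousOn hu'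
  refine integrableOn_fracKernel_smul hβ (C := C * C') (measurable_deriv _).aestronglyMeasurable
    fun s hs => ?_
  have hs' := Ioo_subset_Icc_self hs
  have hφu := hC _ (mem_image_of_mem u hs')
  rw [show deriv (fun r => φ (u r)) s = φ' (u s) (u' s) from
    ((hφ' (u s)).comp_hasDerivAt s (hu s hs')).deriv]
  exact ((φ' (u s)).le_opNorm _).trans
    (mul_le_mul hφu (hC' s hs') (norm_nonneg _) ((norm_nonneg _).trans hφu))

theorem ConvexOn.setIntegral_fracKernel_mul_deriv_comp_le (hφ : ConvexOn ℝ univ φ)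
    (hφ' : ∀ x, HasFDerivAt φ (φ' x) x) (hβ0 : 0 < β) (hβ1 : β ≤ 1) (ht : 0 < t)
    (hu : ∀ s ∈ Icc 0 t, HasDerivAt u (u' s) s) (hu' : ContinuousOn u' (Icc 0 t)) :
    ∫ s in Ioo 0 t, fracKernel β (t - s) * deriv (fun r => φ (u r)) s
      ≤ φ' (u t) (∫ s in Ioo 0 t, fracKernel β (t - s) • u' s) := by
  set L := φ' (u t)
  set F : ℝ → ℝ := fun r => φ (u r) - L (u r)
  have hF : ∀ s ∈ Icc 0 t, HasDerivAt F (deriv (fun r => φ (u r)) s - L (u' s)) s := fun s hs =>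
    ((hφ' (u s)).comp_hasDerivAt s (hu s hs)).differentiableAt.hasDerivAt.sub
      (L.hasFDerivAt.comp_hasDerivAt s (hu s hs))
  have hmin : IsMinOn F (Icc 0 t) t := isMinOn_iff.2 fun s _ => by
    have := hφ.add_fderiv_sub_le (hφ' (u t)) (u s)
    rw [map_sub] at this
    linarith
  obtain ⟨C, hC⟩ := isCompact_Icc.exists_bound_of_continuousOn hu'
  have hv : IntegrableOn (fun s => fracKernel β (t - s) • u' s) (Ioo 0 t) :=
    integrableOn_fracKernel_smul hβ0 ((hu'.mono Ioo_subset_Icc_self).aestronglyMeasurable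
      measurableSet_Ioo) fun s hs => hC s (Ioo_subset_Icc_self hs)
  have hint := hφ.integrableOn_fracKernel_mul_deriv_comp hφ' hβ0 hu hu'
  have hLv := L.integrable_comp hv
  have hderivF : ∀ s ∈ Ioo 0 t, fracKernel β (t - s) * deriv F s
      = fracKernel β (t - s) * deriv (fun r => φ (u r)) s - L (fracKernel β (t - s) • u' s) := by
    intro s hs
    rw [(hF s (Ioo_subset_Icc_self hs)).deriv, map_smul, smul_eq_mul]
    ring
  have hkey := setIntegral_fracKernel_mul_deriv_nonpos_of_isMinOn hβ0 hβ1 ht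
    (fun s hs => (hF s hs).differentiableAt) hmin
    ((hint.sub hLv).congr_fun (fun s hs => (hderivF s hs).symm) measurableSet_Ioo)
  rw [setIntegral_congr_fun measurableSet_Ioo hderivF, integral_sub hint hLv,
    L.integral_comp_comm hv] at hkey
  linarith

end Convex

theorem HasFDerivAt.sub_half_mul_norm_sq {H : Type*} [NormedAddCommGroup H]
    [InnerProductSpace ℝ H] {f : H → ℝ} {f' : H →L[ℝ] ℝ} {x : H} (hf : HasFDerivAt f f' x)
    (c : ℝ) : HasFDerivAt (fun y => f y - c / 2 * ‖y‖ ^ 2) (f' - c • innerSL ℝ x) x := by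
  refine (hf.sub ((hasStrictFDerivAt_norm_sq x).hasFDerivAt.const_mul (c / 2))).congr_fderiv ?_
  ext y
  simp
  ring

theorem fractional_chain_semiconvex_general {H : Type*} [NormedAddCommGroup H] [InnerProductSpace ℝ H]
    [CompleteSpace H]
    (α T lam : ℝ) (hα : α ∈ Set.Ioo (0:ℝ) 1)
    (f : H → ℝ) (f' : H → H →L[ℝ] ℝ)
    (hf : ∀ x, HasFDerivAt f (f' x) x)
    (hconv : ConvexOn ℝ Set.univ (fun x => f x - lam / 2 * ‖x‖ ^ 2))
    (u u' : ℝ → H)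
    (hu : ∀ t ∈ Set.Ico (0:ℝ) T, HasDerivAt u (u' t) t)
    (hu' : ContinuousOn u' (Set.Ico 0 T)) :
    ∀ t ∈ Set.Ioo (0:ℝ) T,
      (∫ s in Set.Ioo 0 t,
          ((t - s) ^ ((1 - α) - 1) / Real.Gamma (1 - α)) * deriv (fun r => f (u r)) s)
        ≤ f' (u t) (∫ s in Set.Ioo 0 t, ((t - s) ^ ((1 - α) - 1) / Real.Gamma (1 - α)) • u' s)
          + lam / 2 * (∫ s in Set.Ioo 0 t,
              ((t - s) ^ ((1 - α) - 1) / Real.Gamma (1 - α)) * deriv (fun r => ‖u r‖ ^ 2) s)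
          - lam * (inner ℝ (∫ s in Set.Ioo 0 t,
              ((t - s) ^ ((1 - α) - 1) / Real.Gamma (1 - α)) • u' s) (u t) : ℝ) := by
  rintro t ⟨ht0, htT⟩
  have hβ0 : 0 < 1 - α := by linarith [hα.2]
  have hβ1 : 1 - α ≤ 1 := by linarith [hα.1]
  have hIcc : Icc 0 t ⊆ Ico 0 T := fun s hs => ⟨hs.1, hs.2.trans_lt htT⟩
  have hut : ∀ s ∈ Icc 0 t, HasDerivAt u (u' s) s := fun s hs => hu s (hIcc hs)
  have hφ' := fun x => (hf x).sub_half_mul_norm_sq lam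
  have hsq' : ∀ x : H, HasFDerivAt (fun y => ‖y‖ ^ 2) (2 • innerSL ℝ x) x :=
    fun x => (hasStrictFDerivAt_norm_sq x).hasFDerivAt
  have hsq : ConvexOn ℝ univ fun y : H => ‖y‖ ^ 2 :=
    convexOn_univ_norm.pow (fun _ _ => norm_nonneg _) 2
  have hchain :=
    hconv.setIntegral_fracKernel_mul_deriv_comp_le hφ' hβ0 hβ1 ht0 hut (hu'.mono hIcc)
  have hIφ := hconv.integrableOn_fracKernel_mul_deriv_comp hφ' hβ0 hut (hu'.mono hIcc)
  have hIsq := hsq.integrableOn_fracKernel_mul_deriv_comp hsq' hβ0 hut (hu'.mono hIcc)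
  have hsplit : ∀ s ∈ Ioo 0 t, fracKernel (1 - α) (t - s) * deriv (fun r => f (u r)) s
      = fracKernel (1 - α) (t - s) * deriv (fun r => f (u r) - lam / 2 * ‖u r‖ ^ 2) s
        + lam / 2 * (fracKernel (1 - α) (t - s) * deriv (fun r => ‖u r‖ ^ 2) s) := by
    intro s hs
    have hus := hut s (Ioo_subset_Icc_self hs)
    have hfu : DifferentiableAt ℝ (fun r => f (u r)) s :=
      ((hf (u s)).comp_hasDerivAt s hus).differentiableAt
    have hsqu : DifferentiableAt ℝ (fun r => ‖u r‖ ^ 2) s :=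
      ((hsq' (u s)).comp_hasDerivAt s hus).differentiableAt
    rw [deriv_fun_sub hfu (hsqu.const_mul _), deriv_const_mul _ hsqu]
    ring
  unfold fracKernel at hchain hIφ hIsq hsplit
  rw [setIntegral_congr_fun measurableSet_Ioo hsplit, integral_add hIφ (hIsq.const_mul _),
    integral_const_mul]
  simp only [sub_apply, smul_apply, innerSL_apply_apply, smul_eq_mul] at hchain
  rw [real_inner_comm]
  linarith

/-- Fractional chain inequality for `λ`-convex Fréchet differentiable functionals:
for `u ∈ C¹([0,T);H)` and `t ∈ (0,T)`,
`∂ₜ^α (f∘u)(t) ≤ ⟨f'(u(t)), ∂ₜ^α u(t)⟩ + (λ/2) ∂ₜ^α ‖u‖²(t) − λ ⟨∂ₜ^α u(t), u(t)⟩`,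
where `(∂ₜ^α v)(t) = ∫₀ᵗ g_{1-α}(t-s) v'(s) ds` with `g_β(t) = t^(β-1)/Γ(β)`. -/
theorem fractional_chain_semiconvex {H : Type*} [NormedAddCommGroup H] [InnerProductSpace ℝ H]
    [CompleteSpace H]
    (α T lam : ℝ) (hα : α ∈ Set.Ioo (0:ℝ) 1) (hT : 0 < T)
    (f : H → ℝ) (f' : H → H →L[ℝ] ℝ)
    (hf : ∀ x, HasFDerivAt f (f' x) x)
    (hconv : ConvexOn ℝ Set.univ (fun x => f x - lam / 2 * ‖x‖ ^ 2))
    (u u' : ℝ → H)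
    (hu : ∀ t ∈ Set.Ico (0:ℝ) T, HasDerivAt u (u' t) t)
    (hu' : ContinuousOn u' (Set.Ico 0 T)) :
    ∀ t ∈ Set.Ioo (0:ℝ) T,
      (∫ s in Set.Ioo 0 t,
          ((t - s) ^ ((1 - α) - 1) / Real.Gamma (1 - α)) * deriv (fun r => f (u r)) s)
        ≤ f' (u t) (∫ s in Set.Ioo 0 t, ((t - s) ^ ((1 - α) - 1) / Real.Gamma (1 - α)) • u' s)
          + lam / 2 * (∫ s in Set.Ioo 0 t,
              ((t - s) ^ ((1 - α) - 1) / Real.Gamma (1 - α)) * deriv (fun r => ‖u r‖ ^ 2) s)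
          - lam * (inner ℝ (∫ s in Set.Ioo 0 t,
              ((t - s) ^ ((1 - α) - 1) / Real.Gamma (1 - α)) • u' s) (u t) : ℝ) :=
  fractional_chain_semiconvex_general α T lam hα f f' hf hconv u u' hu hu'
end

section
/- Let α ∈ (0,1), T > 0, let H be a real Hilbert space, u₀ ∈ H, and let f : [0,T] → H be continuous and bounded. Define ũ(t,θ) = −c₀(θ) ∫₀ᵗ e^{−c₁(θ)(t−s)} f(s) ds for t ∈ [0,T], θ ∈ (0,1). Then for every t ∈ (0,T], the function θ ↦ w_α(θ) ũ(t,θ) is Bochner integrable on (0,1) and u₀ + ∫₀¹ w_α(θ) ũ(t,θ) dθ = u₀ − ∫₀ᵗ g_α(t−s) f(s) ds. -/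
/-!
The substitution `x = θ/(1-θ)` maps `(0,1)` onto `(0,∞)` with `dx = dθ/(1-θ)²` and turns
`∫₀¹ w_α(θ) c₀(θ)² e^{-c₁(θ)τ} dθ` into the Gamma integral
`∫₀^∞ x^{-α} e^{-τx} dx / (Γ(1-α)Γ(α)) = g_α(τ)`. As this kernel is nonnegative and
`g_α(t-·)‖f‖` is integrable on `(0,t)`, Tonelli makes `(θ,s) ↦ w_α c₀ e^{-c₁(t-s)} f(s)`
integrable on `(0,1) × (0,t)`, and Fubini exchanges the two integrals.
-/

open MeasureTheory Set Real

theorem hasDerivAt_div_one_sub {θ : ℝ} (hθ : θ ≠ 1) :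
    HasDerivAt (fun x : ℝ => x / (1 - x)) ((1 - θ) ^ 2)⁻¹ θ :=
  ((hasDerivAt_id' θ).div ((hasDerivAt_id' θ).const_sub 1) (sub_ne_zero.mpr hθ.symm)).congr_deriv
    (by ring)

theorem injOn_div_one_sub : InjOn (fun x : ℝ => x / (1 - x)) (Ioo 0 1) := by
  intro a ha b hb hab
  field_simp [sub_ne_zero.mpr ha.2.ne', sub_ne_zero.mpr hb.2.ne'] at hab
  linarith

theorem image_div_one_sub_Ioo : (fun x : ℝ => x / (1 - x)) '' Ioo 0 1 = Ioi 0 := by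
  ext y
  constructor
  · rintro ⟨x, hx, rfl⟩
    exact div_pos hx.1 (sub_pos.mpr hx.2)
  · intro (hy : 0 < y)
    refine ⟨y / (1 + y), ⟨by positivity, (div_lt_one (by positivity)).mpr (by linarith)⟩, ?_⟩
    field_simp
    ring

theorem abs_deriv_smul_rpow_mul_exp_div_one_sub {α τ θ : ℝ} (hθ : θ ∈ Ioo 0 1) :
    |((1 - θ) ^ 2)⁻¹| • ((θ / (1 - θ)) ^ (-α) * exp (-(τ * (θ / (1 - θ))))) =
      θ ^ (-α) * (1 - θ) ^ (α - 2) * exp (-(θ / (1 - θ)) * τ) := by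
  have h1 : 0 < 1 - θ := sub_pos.mpr hθ.2
  have hpow : ((1 - θ) ^ 2)⁻¹ * ((1 - θ) ^ (-α))⁻¹ = (1 - θ) ^ (α - 2) := by
    rw [← rpow_natCast, ← rpow_neg h1.le, ← rpow_neg h1.le, ← rpow_add h1]
    norm_num
    ring_nf
  rw [smul_eq_mul, abs_of_pos (by positivity), div_rpow hθ.1.le h1.le, ← hpow]
  ring_nf

theorem integrableOn_rpow_mul_exp_div_one_sub {α τ : ℝ} (hα : α < 1) (hτ : 0 < τ) :
    IntegrableOn (fun θ => θ ^ (-α) * (1 - θ) ^ (α - 2) * exp (-(θ / (1 - θ)) * τ))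
      (Ioo 0 1) := by
  have hgamma : IntegrableOn (fun x : ℝ => x ^ (-α) * exp (-(τ * x))) (Ioi 0) := by
    simpa using integrableOn_rpow_mul_exp_neg_mul_rpow (by linarith : -1 < -α) one_pos hτ
  rw [← image_div_one_sub_Ioo, integrableOn_image_iff_integrableOn_abs_deriv_smul
    measurableSet_Ioo (fun θ hθ => (hasDerivAt_div_one_sub hθ.2.ne).hasDerivWithinAt)
    injOn_div_one_sub] at hgamma
  exact hgamma.congr_fun (fun θ hθ => abs_deriv_smul_rpow_mul_exp_div_one_sub hθ)
    measurableSet_Ioo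

theorem integral_rpow_mul_exp_div_one_sub {α τ : ℝ} (hα : α < 1) (hτ : 0 < τ) :
    ∫ θ in Ioo 0 1, θ ^ (-α) * (1 - θ) ^ (α - 2) * exp (-(θ / (1 - θ)) * τ) =
      Gamma (1 - α) * τ ^ (α - 1) := by
  have hgamma : ∫ x in Ioi 0, x ^ (-α) * exp (-(τ * x)) = Gamma (1 - α) * τ ^ (α - 1) := by
    have := integral_rpow_mul_exp_neg_mul_Ioi (by linarith : 0 < 1 - α) hτ
    rw [sub_sub_cancel_left, one_div, inv_rpow hτ.le, ← rpow_neg hτ.le, neg_sub] at this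
    rw [this, mul_comm]
  rw [← setIntegral_congr_fun measurableSet_Ioo
      (fun θ hθ => abs_deriv_smul_rpow_mul_exp_div_one_sub hθ),
    ← integral_image_eq_integral_abs_deriv_smul measurableSet_Ioo
      (fun θ hθ => (hasDerivAt_div_one_sub hθ.2.ne).hasDerivWithinAt) injOn_div_one_sub
      (fun x => x ^ (-α) * exp (-(τ * x))),
    image_div_one_sub_Ioo, hgamma]

-- `w_α(θ) c₀(θ)² e^{-c₁(θ) τ}`
noncomputable def modeKernel (α θ τ : ℝ) : ℝ :=
  θ ^ (-α) * (1 - θ) ^ (α - 2) * exp (-(θ / (1 - θ)) * τ) / (Gamma (1 - α) * Gamma α)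

theorem modeKernel_nonneg {α θ τ : ℝ} (hα : α ∈ Ioo 0 1) (hθ : θ ∈ Ioo 0 1) :
    0 ≤ modeKernel α θ τ := by
  have := Gamma_pos_of_pos (sub_pos.mpr hα.2)
  have := Gamma_pos_of_pos hα.1
  have := rpow_nonneg hθ.1.le (-α)
  have := rpow_nonneg (sub_pos.mpr hθ.2).le (α - 2)
  unfold modeKernel
  positivity

theorem integrableOn_modeKernel {α τ : ℝ} (hα : α < 1) (hτ : 0 < τ) :
    IntegrableOn (modeKernel α · τ) (Ioo 0 1) :=
  (integrableOn_rpow_mul_exp_div_one_sub hα hτ).div_const _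

theorem integral_modeKernel {α τ : ℝ} (hα : α < 1) (hτ : 0 < τ) :
    ∫ θ in Ioo 0 1, modeKernel α θ τ = τ ^ (α - 1) / Gamma α := by
  simp only [modeKernel, integral_div, integral_rpow_mul_exp_div_one_sub hα hτ]
  exact mul_div_mul_left _ _ (Gamma_pos_of_pos (sub_pos.mpr hα)).ne'

theorem continuousOn_modeKernel (α : ℝ) :
    ContinuousOn (fun p : ℝ × ℝ => modeKernel α p.1 p.2) (Ioo 0 1 ×ˢ univ) := by
  have hθ : ∀ p ∈ Ioo (0 : ℝ) 1 ×ˢ (univ : Set ℝ), 0 < p.1 ∧ 0 < 1 - p.1 :=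
    fun p hp => ⟨hp.1.1, sub_pos.mpr hp.1.2⟩
  refine ContinuousOn.div_const (ContinuousOn.mul (ContinuousOn.mul ?_ ?_) ?_) _
  · exact continuousOn_fst.rpow_const fun p hp => Or.inl (hθ p hp).1.ne'
  · exact (continuousOn_const.sub continuousOn_fst).rpow_const
      fun p hp => Or.inl (hθ p hp).2.ne'
  · exact continuous_exp.comp_continuousOn <|
      ((continuousOn_fst.div (continuousOn_const.sub continuousOn_fst)
        fun p hp => (hθ p hp).2.ne').neg).mul continuousOn_snd

theorem aestronglyMeasurable_modeKernel_sub (α t : ℝ) {s : Set ℝ} (hs : MeasurableSet s) :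
    AEStronglyMeasurable (Function.uncurry fun θ σ => modeKernel α θ (t - σ))
      ((volume.restrict (Ioo 0 1)).prod (volume.restrict s)) := by
  rw [Measure.prod_restrict]
  exact ((continuousOn_modeKernel α).comp
    (continuous_fst.prodMk (continuous_const.sub continuous_snd)).continuousOn
    fun p hp => ⟨hp.1, mem_univ _⟩).aestronglyMeasurable (measurableSet_Ioo.prod hs)

theorem weight_smul_mode_eq_neg_integral_modeKernel {E : Type*} [NormedAddCommGroup E]
    [NormedSpace ℝ E] (μ : Measure ℝ) (f : ℝ → E) (α : ℝ) {θ : ℝ} (hθ : θ ∈ Ioo 0 1) (t : ℝ) :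
    (θ ^ (-α) * (1 - θ) ^ (α - 1) / (Gamma (1 - α) * Gamma α)) •
        (-(1 / (1 - θ)) • ∫ s, exp (-(θ / (1 - θ)) * (t - s)) • f s ∂μ) =
      -∫ s, modeKernel α θ (t - s) • f s ∂μ := by
  have h1 : 0 < 1 - θ := sub_pos.mpr hθ.2
  have hpow : (1 - θ) ^ (α - 1) = (1 - θ) ^ (α - 2) * (1 - θ) := by
    rw [← rpow_add_one h1.ne']
    ring_nf
  rw [smul_smul, ← integral_smul, ← integral_neg]
  congr 1 with s
  rw [smul_smul, ← neg_smul, modeKernel, hpow]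
  congr 1
  field_simp

section KernelFubini

variable {X Y E : Type*} [MeasurableSpace X] [MeasurableSpace Y] [NormedAddCommGroup E]
  [NormedSpace ℝ E] {μ : Measure X} {ν : Measure Y} [SFinite μ] [SFinite ν]
  {k : X → Y → ℝ} {g : Y → ℝ} {f : Y → E}

theorem integrable_prod_kernel_smul (hk : AEStronglyMeasurable (Function.uncurry k) (μ.prod ν))
    (hf : AEStronglyMeasurable f ν) (hk0 : ∀ᵐ y ∂ν, ∀ᵐ x ∂μ, 0 ≤ k x y)
    (hk_int : ∀ᵐ y ∂ν, Integrable (k · y) μ) (hk_eq : ∀ᵐ y ∂ν, ∫ x, k x y ∂μ = g y)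
    (hg : Integrable (fun y => g y * ‖f y‖) ν) :
    Integrable (Function.uncurry fun x y => k x y • f y) (μ.prod ν) := by
  refine (integrable_prod_iff' (hk.smul hf.comp_snd)).mpr
    ⟨hk_int.mono fun y hy => hy.smul_const (f y), hg.congr ?_⟩
  filter_upwards [hk0, hk_eq] with y hy0 hy_eq
  calc g y * ‖f y‖ = ∫ x, k x y * ‖f y‖ ∂μ := by rw [integral_mul_const, hy_eq]
    _ = ∫ x, ‖k x y • f y‖ ∂μ := integral_congr_ae <| hy0.mono fun x hx => by
        simp only [norm_smul, Real.norm_of_nonneg hx]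

theorem integral_integral_kernel_smul [CompleteSpace E]
    (hkf : Integrable (Function.uncurry fun x y => k x y • f y) (μ.prod ν))
    (hk_eq : ∀ᵐ y ∂ν, ∫ x, k x y ∂μ = g y) :
    ∫ x, ∫ y, k x y • f y ∂ν ∂μ = ∫ y, g y • f y ∂ν := by
  rw [integral_integral_swap hkf]
  exact integral_congr_ae (hk_eq.mono fun y hy => by simp only [integral_smul_const, hy])

end KernelFubini

theorem integrableOn_rpow_sub_mul_norm {E : Type*} [NormedAddCommGroup E] {α t C : ℝ}
    (hα : 0 < α) {f : ℝ → E} (hf : AEStronglyMeasurable f (volume.restrict (Ioo 0 t)))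
    (hC : ∀ s ∈ Ioo 0 t, ‖f s‖ ≤ C) :
    IntegrableOn (fun s => (t - s) ^ (α - 1) / Gamma α * ‖f s‖) (Ioo 0 t) := by
  have hpow : IntegrableOn (fun s => (t - s) ^ (α - 1)) (Ioo 0 t) := by
    have := (intervalIntegral.intervalIntegrable_rpow' (r := α - 1) (by linarith)
      (a := 0) (b := t)).comp_sub_left t
    simp only [sub_zero, sub_self] at this
    exact this.symm.1.mono_set Ioo_subset_Ioc_self
  refine (hpow.div_const _).mul_bdd (c := C) hf.norm ?_
  filter_upwards [ae_restrict_mem measurableSet_Ioo] with s hs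
  simpa using hC s hs

theorem modes_reconstruct_fractional_general {H : Type*} [NormedAddCommGroup H]
    [InnerProductSpace ℝ H] [CompleteSpace H]
    (α T : ℝ) (hα : α ∈ Set.Ioo (0:ℝ) 1)
    (u₀ : H) (f : ℝ → H)
    (hf : ContinuousOn f (Set.Icc 0 T)) :
    ∀ t ∈ Set.Ioc (0:ℝ) T,
      IntegrableOn
        (fun θ => (θ ^ (-α) * (1 - θ) ^ (α - 1) / (Real.Gamma (1-α) * Real.Gamma α)) •
          (-(1 / (1 - θ)) • ∫ s in Set.Ioo 0 t, Real.exp (-(θ / (1 - θ)) * (t - s)) • f s))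
        (Set.Ioo (0:ℝ) 1) ∧
      (u₀ + ∫ θ in Set.Ioo (0:ℝ) 1,
          (θ ^ (-α) * (1 - θ) ^ (α - 1) / (Real.Gamma (1-α) * Real.Gamma α)) •
            (-(1 / (1 - θ)) • ∫ s in Set.Ioo 0 t, Real.exp (-(θ / (1 - θ)) * (t - s)) • f s))
        = u₀ - ∫ s in Set.Ioo 0 t, ((t - s) ^ (α - 1) / Real.Gamma α) • f s := by
  intro t ht
  have hsub : Ioo 0 t ⊆ Icc 0 T := fun s hs => ⟨hs.1.le, hs.2.le.trans ht.2⟩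
  obtain ⟨C, hC⟩ := isCompact_Icc.exists_bound_of_continuousOn hf
  have hfm : AEStronglyMeasurable f (volume.restrict (Ioo 0 t)) :=
    (hf.mono hsub).aestronglyMeasurable measurableSet_Ioo
  have hk_eq : ∀ᵐ s ∂volume.restrict (Ioo 0 t),
      ∫ θ in Ioo 0 1, modeKernel α θ (t - s) = (t - s) ^ (α - 1) / Gamma α :=
    ae_restrict_of_forall_mem measurableSet_Ioo fun s hs =>
      integral_modeKernel hα.2 (sub_pos.mpr hs.2)
  have hkf := integrable_prod_kernel_smul
    (aestronglyMeasurable_modeKernel_sub α t measurableSet_Ioo) hfm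
    (ae_restrict_of_forall_mem measurableSet_Ioo fun _ _ =>
      ae_restrict_of_forall_mem measurableSet_Ioo fun _ hθ => modeKernel_nonneg hα hθ)
    (ae_restrict_of_forall_mem measurableSet_Ioo fun s hs =>
      integrableOn_modeKernel hα.2 (sub_pos.mpr hs.2))
    hk_eq (integrableOn_rpow_sub_mul_norm hα.1 hfm fun s hs => hC s (hsub hs))
  have hmode := fun θ (hθ : θ ∈ Ioo 0 1) =>
    weight_smul_mode_eq_neg_integral_modeKernel (volume.restrict (Ioo 0 t)) f α hθ t
  refine ⟨?_, ?_⟩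
  · exact hkf.integral_prod_left.neg.congr
      ((ae_restrict_mem measurableSet_Ioo).mono fun θ hθ => (hmode θ hθ).symm)
  · rw [setIntegral_congr_fun measurableSet_Ioo hmode, integral_neg,
      integral_integral_kernel_smul hkf hk_eq, ← sub_eq_add_neg]

/-- Reconstruction of the fractional integral from the modes: with
`ũ(t,θ) = -c₀(θ) ∫₀ᵗ e^{-c₁(θ)(t-s)} f(s) ds`, `c₀(θ) = 1/(1-θ)`, `c₁(θ) = θ/(1-θ)`,
for every `t ∈ (0,T]` the function `θ ↦ w_α(θ) ũ(t,θ)` is Bochner integrable on `(0,1)` and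
`u₀ + ∫₀¹ w_α(θ) ũ(t,θ) dθ = u₀ - ∫₀ᵗ g_α(t-s) f(s) ds`, where
`w_α(θ) = θ^(-α)(1-θ)^(α-1)/(Γ(1-α)Γ(α))` and `g_α(τ) = τ^(α-1)/Γ(α)`. -/
theorem modes_reconstruct_fractional {H : Type*} [NormedAddCommGroup H]
    [InnerProductSpace ℝ H] [CompleteSpace H]
    (α T : ℝ) (hα : α ∈ Set.Ioo (0:ℝ) 1) (hT : 0 < T)
    (u₀ : H) (f : ℝ → H)
    (hf : ContinuousOn f (Set.Icc 0 T))
    (M : ℝ) (hbdd : ∀ t ∈ Set.Icc (0:ℝ) T, ‖f t‖ ≤ M) :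
    ∀ t ∈ Set.Ioc (0:ℝ) T,
      IntegrableOn
        (fun θ => (θ ^ (-α) * (1 - θ) ^ (α - 1) / (Real.Gamma (1-α) * Real.Gamma α)) •
          (-(1 / (1 - θ)) • ∫ s in Set.Ioo 0 t, Real.exp (-(θ / (1 - θ)) * (t - s)) • f s))
        (Set.Ioo (0:ℝ) 1) ∧
      (u₀ + ∫ θ in Set.Ioo (0:ℝ) 1,
          (θ ^ (-α) * (1 - θ) ^ (α - 1) / (Real.Gamma (1-α) * Real.Gamma α)) •
            (-(1 / (1 - θ)) • ∫ s in Set.Ioo 0 t, Real.exp (-(θ / (1 - θ)) * (t - s)) • f s))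
        = u₀ - ∫ s in Set.Ioo 0 t, ((t - s) ^ (α - 1) / Real.Gamma α) • f s :=
  modes_reconstruct_fractional_general α T hα u₀ f hf
end
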